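/- arXiv:1505.07766 — 5 statements merged into one kernel-verified Lean document; each statement's English description precedes it below -/
import Mathlib

section
/- If x is a point such that the zero vector lies in the interior of the subdifferential of a convex function f: R^N → R at x, then x is the unique global minimizer of f. -/
open Metric
open scoped RealInnerProductSpace

section

variable {E : Type*} [NormedAddCommGroup E] [InnerProductSpace ℝ E]

theorem exists_mem_ball_zero_inner_pos {v : E} (hv : v ≠ 0) {ε : ℝ} (hε : 0 < ε) :
    ∃ d ∈ ball (0 : E) ε, 0 < ⟪d, v⟫ := by
  have hv' : 0 < ‖v‖ := norm_pos_iff.mpr hv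
  refine ⟨(ε / 2 / ‖v‖) • v, ?_, ?_⟩
  · rw [mem_ball_zero_iff, norm_smul, Real.norm_of_nonneg (by positivity),
      div_mul_cancel₀ _ hv'.ne']
    linarith
  · rw [real_inner_smul_left, real_inner_self_eq_norm_sq]
    positivity

theorem lt_of_zero_mem_interior_subgradients {f : E → ℝ} {x : E}
    (h : (0 : E) ∈ interior {d : E | ∀ y, f y - f x ≥ ⟪d, y - x⟫}) {y : E} (hy : y ≠ x) :
    f x < f y := by
  obtain ⟨ε, hε, hball⟩ := isOpen_iff.mp isOpen_interior 0 h
  obtain ⟨d, hd, hpos⟩ := exists_mem_ball_zero_inner_pos (sub_ne_zero.mpr hy) hε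
  have hsub := interior_subset (hball hd) y
  linarith

end

theorem zero_mem_interior_subdifferential_unique_minimizer_general
    (N : ℕ) (f : EuclideanSpace ℝ (Fin N) → ℝ)
    (x : EuclideanSpace ℝ (Fin N))
    (h : (0 : EuclideanSpace ℝ (Fin N)) ∈
      interior {d : EuclideanSpace ℝ (Fin N) |
        ∀ y, f y - f x ≥ inner ℝ d (y - x)}) :
    ∀ y, y ≠ x → f x < f y :=
  fun _ hy => lt_of_zero_mem_interior_subgradients h hy

/-- If `0` lies in the interior of the subdifferential of a convex function
`f : ℝ^N → ℝ` at `x`, then `x` is the unique global minimizer of `f`. -/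
theorem zero_mem_interior_subdifferential_unique_minimizer
    (N : ℕ) (f : EuclideanSpace ℝ (Fin N) → ℝ)
    (hf : ConvexOn ℝ Set.univ f)
    (x : EuclideanSpace ℝ (Fin N))
    (h : (0 : EuclideanSpace ℝ (Fin N)) ∈
      interior {d : EuclideanSpace ℝ (Fin N) |
        ∀ y, f y - f x ≥ inner ℝ d (y - x)}) :
    ∀ y, y ≠ x → f x < f y :=
  zero_mem_interior_subdifferential_unique_minimizer_general N f x h
end

section
/- With notation as in the Vandermonde factorization of a quasi-Hankel matrix: if additionally all coefficients c_k are nonzero and the points z_1,...,z_r are A-independent (i.e., the quasi-Vandermonde matrix V_A(z_1,...,z_r) has rank r), then rank([h_{α_i+α_j}]_{i,j=1}^M) = r exactly. -/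
/-! The quasi-Hankel matrix factors as `V * diagonal c * Vᵀ`. Full column rank makes `V`
injective, so left multiplication by it preserves rank, and `diagonal c` is invertible, leaving
`rank Vᵀ = rank V = r`. -/

open Matrix

namespace Matrix

variable {m n o K : Type*} [Fintype n] [Field K]

theorem mulVec_injective_of_rank_eq_card_width (A : Matrix m n K)
    (hA : A.rank = Fintype.card n) : Function.Injective A.mulVec := by
  rw [mulVec_injective_iff, linearIndependent_iff_card_eq_finrank_span, ← hA,
    rank_eq_finrank_span_cols, Set.finrank]

theorem rank_mul_eq_right_of_rank_eq_card_width [Fintype o] (A : Matrix m n K) (B : Matrix n o K)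
    (hA : A.rank = Fintype.card n) : (A * B).rank = B.rank := by
  rw [rank, rank, mulVecLin_mul, LinearMap.range_comp,
    ← (Submodule.equivMapOfInjective A.mulVecLin
      (mulVec_injective_of_rank_eq_card_width A hA) _).finrank_eq]

theorem rank_mul_diagonal_mul_transpose [Fintype m] [DecidableEq n] (A : Matrix m n K)
    {c : n → K} (hc : ∀ k, c k ≠ 0) (hA : A.rank = Fintype.card n) :
    (A * diagonal c * Aᵀ).rank = Fintype.card n := by
  have hdet : IsUnit (diagonal c).det := by
    simpa [det_diagonal, Finset.prod_ne_zero_iff] using hc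
  rw [Matrix.mul_assoc, rank_mul_eq_right_of_rank_eq_card_width A _ hA,
    rank_mul_eq_right_of_isUnit_det _ _ hdet, rank_transpose, hA]

end Matrix

section QuasiHankel

variable {ι κ σ R : Type*} [Fintype κ] [Fintype σ] [CommRing R]

def quasiVandermonde (A : ι → σ → ℕ) (z : κ → σ → R) : Matrix ι κ R :=
  of fun i k => ∏ l, z k l ^ A i l

theorem quasiHankel_eq_quasiVandermonde_mul [DecidableEq κ] (A : ι → σ → ℕ) (z : κ → σ → R)
    (c : κ → R) :
    (of fun i j => ∑ k, c k * ∏ l, z k l ^ (A i + A j) l : Matrix ι ι R) =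
      quasiVandermonde A z * diagonal c * (quasiVandermonde A z)ᵀ := by
  ext i j
  rw [mul_apply]
  simp only [mul_diagonal, transpose_apply, quasiVandermonde, of_apply, Pi.add_apply, pow_add,
    Finset.prod_mul_distrib]
  exact Finset.sum_congr rfl fun k _ => by ring

end QuasiHankel

/-- If moreover all `c k` are nonzero and the points `z₁,…,z_r` are `A`-independent
(the quasi-Vandermonde matrix has rank `r`), then the quasi-Hankel matrix
`[h_{αᵢ+αⱼ}]` has rank exactly `r`. -/
theorem quasiHankel_rank_eq_of_A_independent
    (m M r : ℕ) (A : Fin M → (Fin m → ℕ)) (z : Fin r → (Fin m → ℂ))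
    (c : Fin r → ℂ) (hc : ∀ k, c k ≠ 0)
    (h : (Fin m → ℕ) → ℂ)
    (hh : ∀ α : Fin m → ℕ, h α = ∑ k, c k * ∏ i, z k i ^ α i)
    (V : Matrix (Fin M) (Fin r) ℂ) (hV : V = Matrix.of fun i k => ∏ l, z k l ^ A i l)
    (hrank : V.rank = r) :
    (Matrix.of fun i j => h (A i + A j) : Matrix (Fin M) (Fin M) ℂ).rank = r := by
  obtain rfl : V = quasiVandermonde A z := hV
  simp only [hh, quasiHankel_eq_quasiVandermonde_mul]
  simpa using rank_mul_diagonal_mul_transpose _ hc (by simpa using hrank)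
end

section
/- Let B = B^T = U V^T with U, V ∈ C^{n×r} satisfying U^H U = V^H V = I_r, let P = U U^H, and let P_0 be an orthogonal projector of rank r on a subspace of C^n. Then ‖B - P_0 B P_0^T‖_F^2 ≤ 2‖(I - P_0)U‖_F^2 = ‖P - P_0‖_F^2. -/
/-!
With `Q = 1 - P₀`, the matrix `B - P₀ B P₀ᵀ` splits as the Frobenius-orthogonal sum
`Q B + P₀ (B Qᵀ)`. Since `Vᵀ` has orthonormal rows, `‖Q B‖_F = ‖Q U‖_F`; since `B` is symmetric,
`‖B Qᵀ‖_F = ‖Q B‖_F`, and the projector `P₀` does not increase the norm. For the equality,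
`‖Q U‖_F² = r - tr (P P₀)` and `‖P - P₀‖_F² = tr P + tr P₀ - 2 tr (P P₀)`, where both traces
equal `r` because the trace of an idempotent is its rank.
-/

open Matrix

/-- Squared Frobenius norm of a complex matrix. -/
noncomputable def frobSq {m n : ℕ} (M : Matrix (Fin m) (Fin n) ℂ) : ℝ :=
  ∑ i, ∑ j, ‖M i j‖ ^ 2

namespace Matrix

theorem trace_eq_rank_of_isIdempotentElem {K ι : Type*} [Field K] [Fintype ι] [DecidableEq ι]
    {A : Matrix ι ι K} (hA : IsIdempotentElem A) : A.trace = A.rank := by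
  have hLin : IsIdempotentElem (toLin' A) := hA.map toLinAlgEquiv'
  rw [← trace_toLin'_eq, (LinearMap.IsIdempotentElem.isProj_range _ hLin).trace]
  rfl

end Matrix

section frobSq

variable {m n k : ℕ}

theorem ofReal_frobSq (M : Matrix (Fin m) (Fin n) ℂ) : (frobSq M : ℂ) = trace (Mᴴ * M) := by
  simp only [frobSq, trace, diag, mul_apply, conjTranspose_apply]
  push_cast
  rw [Finset.sum_comm]
  refine Finset.sum_congr rfl fun i _ => Finset.sum_congr rfl fun j _ => ?_
  rw [Complex.star_def, mul_comm, Complex.mul_conj']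

theorem frobSq_nonneg (M : Matrix (Fin m) (Fin n) ℂ) : 0 ≤ frobSq M := by
  unfold frobSq
  positivity

theorem frobSq_transpose (M : Matrix (Fin m) (Fin n) ℂ) : frobSq Mᵀ = frobSq M :=
  Finset.sum_comm

theorem frobSq_add_of_conjTranspose_mul_eq_zero {A C : Matrix (Fin m) (Fin n) ℂ}
    (h : Aᴴ * C = 0) : frobSq (A + C) = frobSq A + frobSq C := by
  have h' : Cᴴ * A = 0 := by rw [← conjTranspose_conjTranspose A, ← conjTranspose_mul, h,
    conjTranspose_zero]
  exact_mod_cast show (frobSq (A + C) : ℂ) = frobSq A + frobSq C by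
    simp only [ofReal_frobSq, conjTranspose_add, Matrix.add_mul, Matrix.mul_add, h, h', trace_add,
      add_zero, zero_add]

theorem frobSq_mul_of_mul_conjTranspose_eq_one (A : Matrix (Fin m) (Fin k) ℂ)
    {W : Matrix (Fin k) (Fin n) ℂ} (hW : W * Wᴴ = 1) : frobSq (A * W) = frobSq A := by
  exact_mod_cast show (frobSq (A * W) : ℂ) = frobSq A by
    rw [ofReal_frobSq, ofReal_frobSq, conjTranspose_mul, Matrix.mul_assoc, trace_mul_comm]
    simp only [Matrix.mul_assoc, hW, Matrix.mul_one]

end frobSq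

section projector

variable {n m : ℕ} {P₀ : Matrix (Fin n) (Fin n) ℂ}

theorem frobSq_eq_frobSq_mul_add_frobSq_one_sub_mul (hH : P₀.IsHermitian)
    (hI : IsIdempotentElem P₀) (M : Matrix (Fin n) (Fin m) ℂ) :
    frobSq M = frobSq (P₀ * M) + frobSq ((1 - P₀) * M) := by
  conv_lhs => rw [← Matrix.one_mul M, ← add_sub_cancel P₀ 1, Matrix.add_mul]
  refine frobSq_add_of_conjTranspose_mul_eq_zero ?_
  rw [conjTranspose_mul, hH.eq, Matrix.mul_assoc, ← Matrix.mul_assoc P₀, hI.mul_one_sub_self,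
    Matrix.zero_mul, Matrix.mul_zero]

theorem frobSq_mul_le (hH : P₀.IsHermitian) (hI : IsIdempotentElem P₀)
    (M : Matrix (Fin n) (Fin m) ℂ) : frobSq (P₀ * M) ≤ frobSq M := by
  rw [frobSq_eq_frobSq_mul_add_frobSq_one_sub_mul hH hI M]
  linarith [frobSq_nonneg ((1 - P₀) * M)]

theorem frobSq_sub_mul_mul_transpose (hH : P₀.IsHermitian) (hI : IsIdempotentElem P₀)
    (B : Matrix (Fin n) (Fin n) ℂ) :
    frobSq (B - P₀ * B * P₀ᵀ) = frobSq ((1 - P₀) * B) + frobSq (P₀ * (B * (1 - P₀)ᵀ)) := by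
  have hsplit : B - P₀ * B * P₀ᵀ = (1 - P₀) * B + P₀ * (B * (1 - P₀)ᵀ) := by
    simp only [transpose_sub, transpose_one, sub_mul, mul_sub, one_mul, mul_one, mul_assoc]
    abel
  rw [hsplit]
  refine frobSq_add_of_conjTranspose_mul_eq_zero ?_
  rw [conjTranspose_mul, (isHermitian_one.sub hH).eq, Matrix.mul_assoc, ← Matrix.mul_assoc _ P₀,
    hI.one_sub_mul_self, Matrix.zero_mul, Matrix.mul_zero]

theorem ofReal_frobSq_one_sub_mul (hH : P₀.IsHermitian) (hI : IsIdempotentElem P₀)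
    (U : Matrix (Fin n) (Fin m) ℂ) :
    (frobSq ((1 - P₀) * U) : ℂ) = trace (Uᴴ * U) - trace (U * Uᴴ * P₀) := by
  rw [ofReal_frobSq, conjTranspose_mul, (isHermitian_one.sub hH).eq, Matrix.mul_assoc,
    ← Matrix.mul_assoc (1 - P₀), hI.one_sub.eq, Matrix.sub_mul, Matrix.one_mul, Matrix.mul_sub,
    trace_sub, ← Matrix.mul_assoc, trace_mul_comm (Uᴴ * P₀), Matrix.mul_assoc]

theorem ofReal_frobSq_sub {P : Matrix (Fin n) (Fin n) ℂ} (hPH : P.IsHermitian)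
    (hPI : IsIdempotentElem P) (hH : P₀.IsHermitian) (hI : IsIdempotentElem P₀) :
    (frobSq (P - P₀) : ℂ) = trace P + trace P₀ - 2 * trace (P * P₀) := by
  rw [ofReal_frobSq, (hPH.sub hH).eq, sub_mul, mul_sub, mul_sub, hPI.eq, hI.eq, trace_sub,
    trace_sub, trace_sub, trace_mul_comm P₀ P]
  ring

end projector

/-- For a complex symmetric `B = U Vᵀ` with `Uᴴ U = Vᴴ V = I`, `P = U Uᴴ`, and an
orthogonal (Hermitian idempotent) projector `P₀` of rank `r`:
`‖B - P₀ B P₀ᵀ‖_F² ≤ 2‖(I - P₀)U‖_F² = ‖P - P₀‖_F²`. -/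
theorem frobSq_B_sub_proj_le
    (n r : ℕ) (U V : Matrix (Fin n) (Fin r) ℂ)
    (hU : Uᴴ * U = 1) (hV : Vᴴ * V = 1)
    (B : Matrix (Fin n) (Fin n) ℂ) (hB : B = U * Vᵀ) (hBsymm : Bᵀ = B)
    (P : Matrix (Fin n) (Fin n) ℂ) (hP : P = U * Uᴴ)
    (P₀ : Matrix (Fin n) (Fin n) ℂ) (hP₀herm : P₀ᴴ = P₀)
    (hP₀idem : P₀ * P₀ = P₀) (hP₀rank : P₀.rank = r) :
    frobSq (B - P₀ * B * P₀ᵀ) ≤ 2 * frobSq ((1 - P₀) * U) ∧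
      2 * frobSq ((1 - P₀) * U) = frobSq (P - P₀) := by
  have hP₀ : P₀.IsHermitian := hP₀herm
  have hVT : Vᵀ * Vᵀᴴ = 1 := by
    rw [conjTranspose_transpose_eq_transpose_conjTranspose, ← transpose_mul, hV, transpose_one]
  have hQB : frobSq ((1 - P₀) * B) = frobSq ((1 - P₀) * U) := by
    rw [hB, ← Matrix.mul_assoc, frobSq_mul_of_mul_conjTranspose_eq_one _ hVT]
  have hBQ : frobSq (B * (1 - P₀)ᵀ) = frobSq ((1 - P₀) * U) := by
    rw [← frobSq_transpose, transpose_mul, transpose_transpose, hBsymm, hQB]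
  refine ⟨?_, ?_⟩
  · rw [frobSq_sub_mul_mul_transpose hP₀ hP₀idem, hQB]
    linarith [frobSq_mul_le hP₀ hP₀idem (B * (1 - P₀)ᵀ)]
  · have hPH : P.IsHermitian := hP ▸ isHermitian_mul_conjTranspose_self U
    have hPI : IsIdempotentElem P := by
      rw [hP, IsIdempotentElem, Matrix.mul_assoc, ← Matrix.mul_assoc Uᴴ, hU, Matrix.one_mul]
    have htrU : trace (Uᴴ * U) = r := by simp [hU]
    exact_mod_cast show (2 * frobSq ((1 - P₀) * U) : ℂ) = frobSq (P - P₀) by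
      rw [ofReal_frobSq_one_sub_mul hP₀ hP₀idem, ofReal_frobSq_sub hPH hPI hP₀ hP₀idem,
        trace_eq_rank_of_isIdempotentElem hP₀idem, hP₀rank, hP, trace_mul_comm U, htrU]
      ring
end

section
/- Let M_ext = [[M_1, -M_3],[M_2, M_4]] ∈ R^{2n×2n}, and define the complex matrix M_C = (M_1+M_4)/2 + i(M_2+M_3)/2. Then the spectral norm satisfies ‖M_C‖_2 ≤ ‖M_ext‖_2, with equality if M_1 = M_4 and M_2 = M_3. -/
/-!
Identifying `ℂⁿ` isometrically with `ℝⁿ ⊕ ℝⁿ` via real and imaginary parts turns `A + iB` into the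
real block matrix `[[A, -B], [B, A]]`, so both have the same spectral norm. For
`M_ext = [[M₁, -M₃], [M₂, M₄]]` this block matrix (with `A = (M₁+M₄)/2`, `B = (M₂+M₃)/2`) is
`(M_ext + J M_ext Jᵀ) / 2` for the orthogonal matrix `J = [[0, -1], [1, 0]]`, and averaging with a
unitary conjugate does not increase a C⋆-norm.
-/

open Matrix

/-- The spectral norm (largest singular value) of a square matrix over `ℝ` or `ℂ`,
as the operator norm of the induced map on Euclidean space. -/
noncomputable def specNorm {𝕜 : Type*} [RCLike 𝕜] {n : Type*} [Fintype n] [DecidableEq n]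
    (M : Matrix n n 𝕜) : ℝ :=
  ‖Matrix.toEuclideanCLM (𝕜 := 𝕜) M‖

open scoped Matrix.Norms.L2Operator

theorem CStarRing.norm_half_smul_add_unitary_conj_le {E : Type*} [NormedRing E] [StarRing E]
    [CStarRing E] [NormedSpace ℝ E] (U : unitary E) (a : E) :
    ‖(2 : ℝ)⁻¹ • (a + U * a * star U)‖ ≤ ‖a‖ := by
  have hconj : ‖(U : E) * a * star U‖ = ‖a‖ := by
    rw [CStarRing.norm_mul_coe_unitary, CStarRing.norm_coe_unitary_mul]
  calc ‖(2 : ℝ)⁻¹ • (a + U * a * star U)‖ = 2⁻¹ * ‖a + U * a * star U‖ := by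
        rw [norm_smul, Real.norm_of_nonneg (by norm_num)]
    _ ≤ 2⁻¹ * (‖a‖ + ‖a‖) := by grw [norm_add_le, hconj]
    _ = ‖a‖ := by ring

namespace EuclideanSpace

variable {m : Type*} [Fintype m]

def reImEquiv : EuclideanSpace ℂ m ≃ₗᵢ[ℝ] EuclideanSpace ℝ (m ⊕ m) where
  toFun x := WithLp.toLp 2 (Sum.elim (fun i => (x i).re) (fun i => (x i).im))
  invFun y := WithLp.toLp 2 (fun i => ⟨y (Sum.inl i), y (Sum.inr i)⟩)
  map_add' x y := by ext (i | i) <;> simp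
  map_smul' c x := by ext (i | i) <;> simp
  left_inv x := by ext i; simp
  right_inv y := by ext (i | i) <;> simp
  norm_map' x := by
    simp [EuclideanSpace.norm_eq, Fintype.sum_sum_type, ← Finset.sum_add_distrib,
      Complex.sq_norm, Complex.normSq_apply, ← sq]

end EuclideanSpace

namespace Matrix

variable {m : Type*} [Fintype m] [DecidableEq m]

theorem reImEquiv_toEuclideanCLM_apply (A B : Matrix m m ℝ) (x : EuclideanSpace ℂ m) :
    EuclideanSpace.reImEquiv (toEuclideanCLM (𝕜 := ℂ) (A.map (↑) + Complex.I • B.map (↑)) x)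
      = toEuclideanCLM (𝕜 := ℝ) (fromBlocks A (-B) B A) (EuclideanSpace.reImEquiv x) := by
  ext (i | i) <;>
    simp [EuclideanSpace.reImEquiv, mulVec, dotProduct, Complex.re_sum, Complex.im_sum,
      Fintype.sum_sum_type, ← Finset.sum_add_distrib, Complex.mul_re, Complex.mul_im, add_comm]

theorem J_mem_unitary : J m ℝ ∈ unitary (Matrix (m ⊕ m) (m ⊕ m) ℝ) := by
  rw [mem_unitaryGroup_iff, star_eq_conjTranspose, conjTranspose_eq_transpose_of_trivial,
    J_transpose, Matrix.mul_neg, J_squared, neg_neg]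

theorem fromBlocks_half_eq_half_smul_add_J_conj (M₁ M₂ M₃ M₄ : Matrix m m ℝ) :
    fromBlocks ((2 : ℝ)⁻¹ • (M₁ + M₄)) (-((2 : ℝ)⁻¹ • (M₂ + M₃)))
        ((2 : ℝ)⁻¹ • (M₂ + M₃)) ((2 : ℝ)⁻¹ • (M₁ + M₄))
      = (2 : ℝ)⁻¹ • (fromBlocks M₁ (-M₃) M₂ M₄
          + J m ℝ * fromBlocks M₁ (-M₃) M₂ M₄ * star (J m ℝ)) := by
  rw [star_eq_conjTranspose, conjTranspose_eq_transpose_of_trivial, J_transpose, J,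
    fromBlocks_neg, fromBlocks_multiply, fromBlocks_multiply, fromBlocks_add, fromBlocks_smul]
  simp only [Matrix.zero_mul, Matrix.mul_zero, Matrix.one_mul, Matrix.mul_one, Matrix.neg_mul,
    Matrix.mul_neg, zero_add, add_zero, neg_zero, neg_neg, smul_add, smul_neg]
  congr 1 <;> abel

end Matrix

theorem specNorm_eq_l2_opNorm {𝕜 m : Type*} [RCLike 𝕜] [Fintype m] [DecidableEq m]
    (M : Matrix m m 𝕜) : specNorm M = ‖M‖ :=
  rfl

theorem specNorm_map_ofReal_add_I_smul {m : Type*} [Fintype m] [DecidableEq m]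
    (A B : Matrix m m ℝ) :
    specNorm (A.map (↑) + Complex.I • B.map (↑) : Matrix m m ℂ)
      = specNorm (fromBlocks A (-B) B A) := by
  let e := EuclideanSpace.reImEquiv (m := m)
  have hcomm : (e : EuclideanSpace ℂ m →L[ℝ] EuclideanSpace ℝ (m ⊕ m))
        ∘L (toEuclideanCLM (𝕜 := ℂ) (A.map (↑) + Complex.I • B.map (↑))).restrictScalars ℝ
      = toEuclideanCLM (𝕜 := ℝ) (fromBlocks A (-B) B A) ∘L e :=
    ContinuousLinearMap.ext (reImEquiv_toEuclideanCLM_apply A B)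
  rw [specNorm, specNorm, ← ContinuousLinearMap.norm_restrictScalars (𝕜' := ℝ),
    ← ContinuousLinearMap.opNorm_linearIsometryEquiv_comp e, hcomm,
    ContinuousLinearMap.opNorm_comp_linearIsometryEquiv]

/-- For `M_ext = [[M₁, -M₃],[M₂, M₄]] ∈ ℝ^{2n×2n}` and
`M_ℂ = (M₁+M₄)/2 + i(M₂+M₃)/2`, the spectral norms satisfy
`‖M_ℂ‖₂ ≤ ‖M_ext‖₂`, with equality when `M₁ = M₄` and `M₂ = M₃`. -/
theorem specNorm_complexified_le
    (n : ℕ) (M₁ M₂ M₃ M₄ : Matrix (Fin n) (Fin n) ℝ)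
    (Mext : Matrix (Fin n ⊕ Fin n) (Fin n ⊕ Fin n) ℝ)
    (hMext : Mext = Matrix.fromBlocks M₁ (-M₃) M₂ M₄)
    (MC : Matrix (Fin n) (Fin n) ℂ)
    (hMC : MC = (((2:ℝ)⁻¹) • (M₁ + M₄)).map (fun x => (x : ℂ))
        + Complex.I • (((2:ℝ)⁻¹) • (M₂ + M₃)).map (fun x => (x : ℂ))) :
    specNorm MC ≤ specNorm Mext ∧
      (M₁ = M₄ → M₂ = M₃ → specNorm MC = specNorm Mext) := by
  have hblocks : specNorm MC = specNorm (fromBlocks ((2 : ℝ)⁻¹ • (M₁ + M₄))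
      (-((2 : ℝ)⁻¹ • (M₂ + M₃))) ((2 : ℝ)⁻¹ • (M₂ + M₃)) ((2 : ℝ)⁻¹ • (M₁ + M₄))) := by
    rw [hMC, specNorm_map_ofReal_add_I_smul]
  refine ⟨?_, fun h₁₄ h₂₃ => ?_⟩
  · rw [hblocks, fromBlocks_half_eq_half_smul_add_J_conj, hMext, specNorm_eq_l2_opNorm,
      specNorm_eq_l2_opNorm]
    exact CStarRing.norm_half_smul_add_unitary_conj_le ⟨_, J_mem_unitary⟩ _
  · have hhalf (X : Matrix (Fin n) (Fin n) ℝ) : (2 : ℝ)⁻¹ • (X + X) = X := by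
      rw [← two_smul ℝ X, inv_smul_smul₀ two_ne_zero]
    rw [hblocks, hMext, ← h₁₄, ← h₂₃, hhalf, hhalf]
end

section
/- Let h ∈ C^{d+1} with h_k = c_{1,k} for 0 ≤ k ≤ r-1 and h_k = 0 for r ≤ k ≤ d, where r ≤ (d+2)/2. Then the all-zeros completion (h_k = 0 for k > d) of the (d+1)×(d+1) Hankel matrix [h_{i+j}]_{i,j=0}^d achieves the minimal possible rank among all completions, namely rank at most r. -/
/-!
If `a k = 0` for `k ≥ t`, every column of the Hankel matrix `[a (i + j)]` beyond the first `t`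
vanishes, so its rank is at most `t`. If instead `a s ≠ 0` and `a` vanishes on `(s, 2s]`, the
leading `(s+1) × (s+1)` block is anti-triangular with `a s` on the antidiagonal, so the rank is at
least `s + 1`. For the zero completion, take `s < r` to be the last index with `h s ≠ 0`: its rank
is exactly `s + 1`, and since `2s ≤ d` every other completion contains the same leading block.
-/

namespace Matrix

variable {R : Type*}

def hankel (m n : ℕ) (a : ℕ → R) : Matrix (Fin m) (Fin n) R :=
  of fun i j => a (i + j)

@[simp]
theorem hankel_apply (m n : ℕ) (a : ℕ → R) (i : Fin m) (j : Fin n) :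
    hankel m n a i j = a (i + j) :=
  rfl

theorem hankel_eq_hankel_mul [Semiring R] {m n t : ℕ} {a : ℕ → R}
    (ha : ∀ k, t ≤ k → a k = 0) :
    hankel m n a =
      hankel m t a * of fun (k : Fin t) (j : Fin n) => if (k : ℕ) = j then (1 : R) else 0 := by
  ext i j
  simp only [mul_apply, hankel_apply, of_apply]
  rw [Fin.sum_univ_eq_sum_range (fun k => a (i + k) * if k = (j : ℕ) then 1 else 0)]
  simp only [mul_ite, mul_one, mul_zero, Finset.sum_ite_eq', Finset.mem_range]
  split_ifs with hj
  · rfl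
  · exact ha _ (by omega)

theorem rank_hankel_le [CommSemiring R] [StrongRankCondition R] {m n t : ℕ} {a : ℕ → R}
    (ha : ∀ k, t ≤ k → a k = 0) : (hankel m n a).rank ≤ t := by
  rw [hankel_eq_hankel_mul ha]
  exact (rank_mul_le_left _ _).trans (rank_le_width _)

theorem isUpperTriangular_hankel_submatrix_rev [Zero R] {s : ℕ} {a : ℕ → R}
    (ha : ∀ k, s < k → k ≤ 2 * s → a k = 0) :
    ((hankel (s + 1) (s + 1) a).submatrix id Fin.rev).IsUpperTriangular := by
  intro i j hji
  simp only [id_eq] at hji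
  simp only [submatrix_apply, id_eq, hankel_apply, Fin.val_rev]
  exact ha _ (by omega) (by omega)

theorem rank_hankel_succ_self [Field R] {s : ℕ} {a : ℕ → R} (hs : a s ≠ 0)
    (ha : ∀ k, s < k → k ≤ 2 * s → a k = 0) : (hankel (s + 1) (s + 1) a).rank = s + 1 := by
  have hdet : ((hankel (s + 1) (s + 1) a).submatrix id Fin.rev).det = a s ^ (s + 1) := by
    rw [det_of_isUpperTriangular (isUpperTriangular_hankel_submatrix_rev ha)]
    have hanti : ∀ i : Fin (s + 1), (i : ℕ) + (s + 1 - (i + 1)) = s := fun i => by omega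
    simp only [submatrix_apply, id_eq, hankel_apply, Fin.val_rev, hanti,
      Finset.prod_const, Finset.card_univ, Fintype.card_fin]
  rw [← rank_submatrix _ (Equiv.refl _) Fin.revPerm,
    rank_of_isUnit _ ((isUnit_iff_isUnit_det _).2 (hdet ▸ (pow_ne_zero _ hs).isUnit)),
    Fintype.card_fin]

theorem succ_le_rank_hankel [Field R] {m n s : ℕ} (hm : s < m) (hn : s < n) {a : ℕ → R}
    (hs : a s ≠ 0) (ha : ∀ k, s < k → k ≤ 2 * s → a k = 0) : s + 1 ≤ (hankel m n a).rank :=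
  calc s + 1 = (hankel (s + 1) (s + 1) a).rank := (rank_hankel_succ_self hs ha).symm
    _ = ((hankel m n a).submatrix (Fin.castLE hm) (Fin.castLE hn)).rank := rfl
    _ ≤ (hankel m n a).rank := rank_submatrix_le _ _ _

theorem rank_hankel_eq [Field R] {m n s : ℕ} (hm : s < m) (hn : s < n) {a : ℕ → R}
    (hs : a s ≠ 0) (ha : ∀ k, s < k → a k = 0) : (hankel m n a).rank = s + 1 :=
  le_antisymm (rank_hankel_le fun k hk => ha k hk)
    (succ_le_rank_hankel hm hn hs fun k hk _ => ha k hk)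

end Matrix

theorem Nat.exists_last_ne_zero {M : Type*} [Zero M] {a : ℕ → M} {r : ℕ}
    (hr : ∀ k, r ≤ k → a k = 0) (ha : a ≠ 0) : ∃ s < r, a s ≠ 0 ∧ ∀ k, s < k → a k = 0 := by
  obtain ⟨k, hk⟩ : ∃ k, a k ≠ 0 := Function.ne_iff.1 ha
  have hkr : k < r := by_contra fun h => hk (hr k (by omega))
  classical
  set s := Nat.findGreatest (fun k => a k ≠ 0) r
  have hs : a s ≠ 0 := Nat.findGreatest_spec (P := fun k => a k ≠ 0) hkr.le hk
  have hsr : s < r := lt_of_le_of_ne (Nat.findGreatest_le r) fun h => hs (hr s h.ge)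
  refine ⟨s, hsr, hs, fun j hj => ?_⟩
  rcases le_or_gt j r with hjr | hjr
  · exact not_not.1 (Nat.findGreatest_is_greatest (P := fun k => a k ≠ 0) hj hjr)
  · exact hr j hjr.le

open Matrix

/-- Hankel matrix completion with zero tail: if `h_k = 0` for `r ≤ k ≤ d` (with
`2r ≤ d+2`), then the all-zeros completion of the `(d+1)×(d+1)` Hankel matrix
`[h_{i+j}]` has rank at most `r` and achieves the minimal rank among all completions. -/
theorem hankel_zero_completion_minimal_rank
    (d r : ℕ) (hr : 2 * r ≤ d + 2)
    (h : ℕ → ℂ) (hzero : ∀ k, r ≤ k → k ≤ d → h k = 0)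
    (h₀ : ℕ → ℂ) (hh₀ : ∀ k, h₀ k = if k ≤ d then h k else 0) :
    (Matrix.of fun i j : Fin (d+1) => h₀ ((i : ℕ) + (j : ℕ))).rank ≤ r ∧
      ∀ g : ℕ → ℂ, (∀ k ≤ d, g k = h k) →
        (Matrix.of fun i j : Fin (d+1) => h₀ ((i : ℕ) + (j : ℕ))).rank ≤
          (Matrix.of fun i j : Fin (d+1) => g ((i : ℕ) + (j : ℕ))).rank := by
  have htail : ∀ k, r ≤ k → h₀ k = 0 := fun k hk => by
    rw [hh₀]
    split_ifs with hkd
    exacts [hzero k hk hkd, rfl]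
  refine ⟨rank_hankel_le htail, fun g hg => ?_⟩
  change (hankel _ _ h₀).rank ≤ (hankel _ _ g).rank
  rcases eq_or_ne h₀ 0 with rfl | hne
  · exact (rank_hankel_le (t := 0) fun _ _ => rfl).trans (Nat.zero_le _)
  obtain ⟨s, hsr, hs, hvan⟩ := Nat.exists_last_ne_zero htail hne
  have hgh₀ : ∀ k ≤ d, g k = h₀ k := fun k hk => by rw [hg k hk, hh₀, if_pos hk]
  have hsd : 2 * s ≤ d := by omega
  rw [rank_hankel_eq (by omega) (by omega) hs hvan]
  exact succ_le_rank_hankel (by omega) (by omega) (hgh₀ s (by omega) ▸ hs)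
    fun k hk hk2s => (hgh₀ k (by omega)).trans (hvan k hk)
end
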